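/- arXiv:2505.09725 — 2 statements merged into one kernel-verified Lean document; each statement's English description precedes it below -/
import Mathlib

section
/- Let h be harmonic on a bounded open set γ, continuous on closure(γ), with h ≥ g on closure(γ) ∩ Λ for a continuous function g, and h = g* on ∂γ ∩ Λ, where g* ≥ sup g. Let X^x be Brownian motion started at x ∈ closure(γ) absorbed on ∂Λ, let τ be any stopping time with τ ≤ τ_{∂Λ}, and let τ_h be the first hitting time of ∂γ. Then h(X^x_{τ ∧ τ_h}) ≥ g(X^x_τ) almost surely. -/
open MeasureTheory ProbabilityTheory Metric
open scoped NNReal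

/-- A standard `d`-dimensional Brownian motion started at `y`. -/
structure IsBrownianMotion (d : ℕ) {Ω : Type*} [MeasureSpace Ω]
    (B : ℝ≥0 → Ω → EuclideanSpace ℝ (Fin d))
    (y : EuclideanSpace ℝ (Fin d)) : Prop where
  meas : ∀ t, Measurable (B t)
  start : ∀ ω, B 0 ω = y
  cont : ∀ ω, Continuous fun t => B t ω
  incr_law : ∀ s t : ℝ≥0, s ≤ t → ∀ i : Fin d,
    Measure.map (fun ω => (B t ω - B s ω) i) ℙ = gaussianReal 0 (t - s)
  indep : ∀ (n : ℕ) (t : Fin (n + 1) → ℝ≥0), Monotone t →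
    iIndepFun
      (fun p : Fin n × Fin d => fun ω => (B (t p.1.succ) ω - B (t p.1.castSucc) ω) p.2) ℙ

/-- `f` is harmonic on the open set `s`. -/
def IsHarmonicOn {d : ℕ} (f : EuclideanSpace ℝ (Fin d) → ℝ)
    (s : Set (EuclideanSpace ℝ (Fin d))) : Prop :=
  ContDiffOn ℝ 2 f s ∧ ∀ u ∈ s,
    ∑ i : Fin d, iteratedFDerivWithin ℝ 2 f s u
      ![EuclideanSpace.single i (1 : ℝ), EuclideanSpace.single i (1 : ℝ)] = 0

/-!
The statement is deterministic, path by path. Before `τ_h` the path stays in `γ`, where `h ≥ g`.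
If `τ_h ≤ τ`, the path sits on `∂γ` at time `τ_h`: inside `Λ` there `h = g* ≥ g`, and on `∂Λ` the
path is absorbed, so `τ = τ_h` and `g` vanishes there while `h ≥ 0`.
-/

open Set

/-- Junk value: `firstHit P s = sInf ∅ = 0` when `P` never visits `s`. -/
noncomputable def firstHit {E : Type*} (P : ℝ≥0 → E) (s : Set E) : ℝ≥0 :=
  sInf {t | P t ∈ s}

section FirstHit

variable {E : Type*} {P : ℝ≥0 → E} {s : Set E} {t : ℝ≥0}

lemma firstHit_le (ht : P t ∈ s) : firstHit P s ≤ t :=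
  csInf_le (OrderBot.bddBelow _) ht

lemma notMem_of_lt_firstHit (ht : t < firstHit P s) : P t ∉ s :=
  fun hs => (firstHit_le hs).not_gt ht

lemma firstHit_eq_zero (h : ∀ t, P t ∉ s) : firstHit P s = 0 := by
  simp [firstHit, h]

variable [TopologicalSpace E]

lemma firstHit_mem (hP : Continuous P) (hs : IsClosed s) (hne : ∃ t, P t ∈ s) :
    P (firstHit P s) ∈ s :=
  (hs.preimage hP).csInf_mem hne (OrderBot.bddBelow _)

lemma firstHit_eq_zero_of_forall_stopped_notMem (hP : Continuous P) (hs : IsClosed s)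
    (h : ∀ t, P (min t (firstHit P s)) ∉ s) : firstHit P s = 0 := by
  by_cases hne : ∃ t, P t ∈ s
  · exact absurd (by simpa using firstHit_mem hP hs hne) (h (firstHit P s))
  · exact firstHit_eq_zero (not_exists.1 hne)

lemma IsOpen.mem_of_forall_le_notMem_frontier (hs : IsOpen s) (hP : Continuous P)
    (h0 : P 0 ∈ closure s) (ht : ∀ r ≤ t, P r ∉ frontier s) : P t ∈ s := by
  have hcl : closure s ∩ P '' Icc 0 t ⊆ s := by
    rintro _ ⟨hy, r, hr, rfl⟩
    by_contra hrs
    exact ht r hr.2 (hs.frontier_eq ▸ ⟨hy, hrs⟩)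
  have h0t : P 0 ∈ P '' Icc 0 t := mem_image_of_mem P ⟨le_rfl, zero_le⟩
  refine (isPreconnected_Icc.image P hP.continuousOn).subset_of_closure_inter_subset hs
    ⟨P 0, h0t, hcl ⟨h0, h0t⟩⟩ hcl ?_
  exact mem_image_of_mem P ⟨zero_le, le_rfl⟩

lemma IsOpen.mem_of_lt_firstHit_frontier (hs : IsOpen s) (hP : Continuous P)
    (h0 : P 0 ∈ closure s) (ht : t < firstHit P (frontier s)) : P t ∈ s :=
  hs.mem_of_forall_le_notMem_frontier hP h0 fun _ hr => notMem_of_lt_firstHit (hr.trans_lt ht)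

end FirstHit

theorem one_sided_excessivity_of_continuous_path {E : Type*} [TopologicalSpace E]
    {Λ γ : Set E} (hΛ : IsOpen Λ) (hγ : IsOpen γ) (hγΛ : γ ⊆ Λ)
    {g h : E → ℝ} {gstar : ℝ} (hsupp : tsupport g ⊆ Λ) (hgs : ∀ u, g u ≤ gstar)
    (hpos : ∀ u ∈ closure γ, 0 ≤ h u) (hhg : ∀ u ∈ closure γ ∩ Λ, g u ≤ h u)
    (hfree : ∀ u ∈ frontier γ ∩ Λ, h u = gstar)
    {Y P : ℝ≥0 → E} (hY : Continuous Y) (hP : ∀ t, P t = Y (min t (firstHit Y (frontier Λ))))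
    (hP0 : P 0 ∈ closure γ) {τ : ℝ≥0} (hτ : τ ≤ firstHit Y (frontier Λ)) :
    g (P τ) ≤ h (P (min τ (firstHit P (frontier γ)))) := by
  set T := firstHit Y (frontier Λ)
  set σ := firstHit P (frontier γ)
  have hPc : Continuous P := by
    rw [funext hP]
    fun_prop
  rcases lt_or_ge τ σ with hτσ | hστ
  · rw [min_eq_left hτσ.le]
    have hPτ := hγ.mem_of_lt_firstHit_frontier hPc hP0 hτσ
    exact hhg _ ⟨subset_closure hPτ, hγΛ hPτ⟩
  rw [min_eq_right hστ]
  by_cases hhit : ∃ t, P t ∈ frontier γ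
  · have hPσ : P σ ∈ frontier γ := firstHit_mem hPc isClosed_frontier hhit
    by_cases hPσΛ : P σ ∈ Λ
    · exact (hgs _).trans (hfree _ ⟨hPσ, hPσΛ⟩).ge
    -- the path reached `∂Λ` at time `σ`, so it was absorbed then and `τ = σ`
    have hTσ : T ≤ σ := by
      refine firstHit_le ?_
      rw [← min_eq_left (hστ.trans hτ), ← hP, hΛ.frontier_eq]
      exact ⟨closure_mono hγΛ (frontier_subset_closure hPσ), hPσΛ⟩
    rw [le_antisymm (hτ.trans hTσ) hστ, image_eq_zero_of_notMem_tsupport fun hg => hPσΛ (hsupp hg)]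
    exact hpos _ (frontier_subset_closure hPσ)
  -- a path that never meets `∂γ` stays in `γ ⊆ Λ`, so `T` and `σ` are both the junk value `0`
  · have hPγ : ∀ t, P t ∈ γ := fun t =>
      hγ.mem_of_forall_le_notMem_frontier hPc hP0 fun r _ hr => hhit ⟨r, hr⟩
    have hT : T = 0 := firstHit_eq_zero_of_forall_stopped_notMem hY isClosed_frontier fun t ht =>
      (disjoint_frontier_iff_isOpen.2 hΛ).notMem_of_mem_left ht (hγΛ (hP t ▸ hPγ t))
    have hσ : σ = 0 := firstHit_eq_zero fun t => not_exists.1 hhit t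
    rw [le_antisymm (hτ.trans hT.le) zero_le, hσ]
    exact hhg _ ⟨subset_closure (hPγ 0), hγΛ (hPγ 0)⟩

theorem one_sided_excessivity_pathwise_general {d : ℕ}
    {Ω : Type*} [MeasureSpace Ω]
    (B : ℝ≥0 → Ω → EuclideanSpace ℝ (Fin d)) (hB : IsBrownianMotion d B 0)
    -- absorbed Brownian motion started at `x`
    (τΛ : EuclideanSpace ℝ (Fin d) → Ω → ℝ≥0)
    (hτΛ : ∀ x ω, τΛ x ω = sInf {t : ℝ≥0 | ‖x + B t ω‖ = 1})
    (X : EuclideanSpace ℝ (Fin d) → ℝ≥0 → Ω → EuclideanSpace ℝ (Fin d))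
    (hX : ∀ x t ω, X x t ω = x + B (min t (τΛ x ω)) ω)
    -- the gain function
    (g : EuclideanSpace ℝ (Fin d) → ℝ)
    (hsuppΛ : tsupport g ⊆ ball (0 : EuclideanSpace ℝ (Fin d)) 1)
    (gstar : ℝ) (hgs : ∀ u, g u ≤ gstar)
    -- the harmonic patch on γ, with free boundary value g*
    (γ : Set (EuclideanSpace ℝ (Fin d))) (hγo : IsOpen γ)
    (hγΛ : γ ⊆ ball (0 : EuclideanSpace ℝ (Fin d)) 1)
    (h : EuclideanSpace ℝ (Fin d) → ℝ)
    (hpos : ∀ u ∈ closure γ, 0 ≤ h u)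
    (hhg : ∀ u ∈ closure γ ∩ ball (0 : EuclideanSpace ℝ (Fin d)) 1, g u ≤ h u)
    (hfree : ∀ u ∈ frontier γ ∩ ball (0 : EuclideanSpace ℝ (Fin d)) 1, h u = gstar)
    -- start point and stopping times
    (x : EuclideanSpace ℝ (Fin d)) (hxγ : x ∈ closure γ)
    (τ : Ω → ℝ≥0) (hτle : ∀ ω, τ ω ≤ τΛ x ω)
    (τh : Ω → ℝ≥0) (hτh : ∀ ω, τh ω = sInf {t : ℝ≥0 | X x t ω ∈ frontier γ}) :
    ∀ᵐ ω, g (X x (τ ω) ω) ≤ h (X x (min (τ ω) (τh ω)) ω) := by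
  refine Filter.Eventually.of_forall fun ω => ?_
  have hT : τΛ x ω = firstHit (fun t => x + B t ω) (frontier (ball 0 1)) := by
    simp only [hτΛ, firstHit, frontier_ball (0 : EuclideanSpace ℝ (Fin d)) one_ne_zero,
      mem_sphere_zero_iff_norm]
  have hP0 : X x 0 ω ∈ closure γ := by
    rwa [hX, min_eq_left zero_le, hB.start, add_zero]
  rw [hτh]
  exact one_sided_excessivity_of_continuous_path isOpen_ball hγo hγΛ hsuppΛ hgs hpos hhg hfree
    (continuous_const.add (hB.cont ω)) (fun t => hT ▸ hX x t ω) hP0 (hT ▸ hτle ω)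

/-- one-sided excessivity, pathwise form:
`h(X^x_{τ ∧ τ_h}) ≥ g(X^x_τ)` almost surely. -/
theorem one_sided_excessivity_pathwise {d : ℕ} (hd : 2 ≤ d)
    {Ω : Type*} [MeasureSpace Ω] [IsProbabilityMeasure (ℙ : Measure Ω)]
    (ℱ : Filtration ℝ≥0 (inferInstance : MeasurableSpace Ω))
    (B : ℝ≥0 → Ω → EuclideanSpace ℝ (Fin d)) (hB : IsBrownianMotion d B 0)
    (hBadapted : Adapted ℱ B)
    -- absorbed Brownian motion started at `x`
    (τΛ : EuclideanSpace ℝ (Fin d) → Ω → ℝ≥0)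
    (hτΛ : ∀ x ω, τΛ x ω = sInf {t : ℝ≥0 | ‖x + B t ω‖ = 1})
    (X : EuclideanSpace ℝ (Fin d) → ℝ≥0 → Ω → EuclideanSpace ℝ (Fin d))
    (hX : ∀ x t ω, X x t ω = x + B (min t (τΛ x ω)) ω)
    -- the gain function
    (g : EuclideanSpace ℝ (Fin d) → ℝ) (hgc : Continuous g) (hg0 : ∀ u, 0 ≤ g u)
    (hsupp : IsCompact (tsupport g))
    (hsuppΛ : tsupport g ⊆ ball (0 : EuclideanSpace ℝ (Fin d)) 1)
    (gstar : ℝ) (hgs : ∀ u, g u ≤ gstar)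
    -- the harmonic patch on γ, with free boundary value g*
    (γ : Set (EuclideanSpace ℝ (Fin d))) (hγo : IsOpen γ)
    (hγΛ : γ ⊆ ball (0 : EuclideanSpace ℝ (Fin d)) 1)
    (h : EuclideanSpace ℝ (Fin d) → ℝ)
    (hharm : IsHarmonicOn h γ) (hcont : ContinuousOn h (closure γ))
    (hpos : ∀ u ∈ closure γ, 0 ≤ h u)
    (hhg : ∀ u ∈ closure γ ∩ ball (0 : EuclideanSpace ℝ (Fin d)) 1, g u ≤ h u)
    (hfree : ∀ u ∈ frontier γ ∩ ball (0 : EuclideanSpace ℝ (Fin d)) 1, h u = gstar)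
    -- start point and stopping times
    (x : EuclideanSpace ℝ (Fin d)) (hxγ : x ∈ closure γ)
    (τ : Ω → ℝ≥0) (hτstop : IsStoppingTime ℱ (fun ω => ((τ ω : ℝ≥0) : WithTop ℝ≥0))) (hτle : ∀ ω, τ ω ≤ τΛ x ω)
    (τh : Ω → ℝ≥0) (hτh : ∀ ω, τh ω = sInf {t : ℝ≥0 | X x t ω ∈ frontier γ}) :
    ∀ᵐ ω, g (X x (τ ω) ω) ≤ h (X x (min (τ ω) (τh ω)) ω) :=
  one_sided_excessivity_pathwise_general B hB τΛ hτΛ X hX g hsuppΛ gstar hgs γ hγo hγΛ h hpos hhg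
    hfree x hxγ τ hτle τh hτh
end

section
/- The limit envelope equals the envelope over the full branched class: for each x ∈ Λ, inf_{n∈ℕ} w_n(x) = lim_{ε→0} inf{h(x) : h ∈ H_∞, h ≥ g, ‖h‖ < ε}, where w_n(x) = lim_{ε→0} inf{h(x) : h ∈ H_n, h ≥ g, ‖h‖ < ε} and H_∞ = ⋃_n H_n. -/
open scoped Classical
open Metric

noncomputable section

/-- A harmonic patch: a domain together with the values of its harmonic extension. -/
structure Patch (d : ℕ) where
  dom : Set (EuclideanSpace ℝ (Fin d))
  f : EuclideanSpace ℝ (Fin d) → ℝ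

/-- Branched harmonic majorants: a base patch, together with (at positive depth) a
branched extension attaching a branched majorant at each interior boundary point. -/
inductive BHM (d : ℕ) : Type
  | base : Patch d → BHM d
  | node : Patch d → (EuclideanSpace ℝ (Fin d) → BHM d) → BHM d

namespace BHM

variable {d : ℕ}

/-- The base patch of a branched harmonic majorant. -/
def patch : BHM d → Patch d
  | base p => p
  | node p _ => p

/-- The base domain `d(h)`. -/
def dom (h : BHM d) : Set (EuclideanSpace ℝ (Fin d)) := h.patch.dom

/-- Pointwise evaluation on the base domain. -/
def eval (h : BHM d) : EuclideanSpace ℝ (Fin d) → ℝ := h.patch.f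

/-- The interior boundary `∂₀`: boundary points inside `Λ` at which the value
is strictly below the truncation level `g*`. -/
def intBdry (gstar : ℝ) (p : Patch d) : Set (EuclideanSpace ℝ (Fin d)) :=
  {u ∈ frontier p.dom | ‖u‖ < 1 ∧ p.f u < gstar}

/-- The matching error `Δ(h)`. -/
def matchErr (gstar : ℝ) : BHM d → ℝ
  | base _ => 0
  | node p κ => ⨆ v : intBdry gstar p, |p.f v.1 - (κ v.1).eval v.1|

/-- The matching-error norm `‖h‖`. -/
def bnorm (gstar : ℝ) : BHM d → ℝ
  | base _ => 0
  | node p κ => (⨆ v : intBdry gstar p, |p.f v.1 - (κ v.1).eval v.1|) +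
      ⨆ v : intBdry gstar p, bnorm gstar (κ v.1)

/-- `h ≥ g`, recursively: the base patch dominates `g` on its closed domain and
every attached branched majorant dominates `g`. -/
def Dominates (g : EuclideanSpace ℝ (Fin d) → ℝ) (gstar : ℝ) : BHM d → Prop
  | base p => ∀ u ∈ closure p.dom, g u ≤ p.f u
  | node p κ => (∀ u ∈ closure p.dom, g u ≤ p.f u) ∧
      ∀ v ∈ intBdry gstar p, Dominates g gstar (κ v)

/-- Membership in `H_n` (branching depth at most `n − 1`). -/
inductive Depth (gstar : ℝ) : BHM d → ℕ → Prop
  | base (p : Patch d) (n : ℕ) : Depth gstar (BHM.base p) (n + 1)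
  | node (p : Patch d) (κ : EuclideanSpace ℝ (Fin d) → BHM d) (n : ℕ)
      (h : ∀ v ∈ intBdry gstar p, Depth gstar (κ v) n) :
      Depth gstar (BHM.node p κ) (n + 1)

/-- Conditions for a patch to belong to the base class `H₀`: smoothly realised as an
open subdomain of the unit ball, with `M`-Lipschitz harmonic values truncated at `g*`. -/
def ValidPatch (M gstar : ℝ) (p : Patch d) : Prop :=
  IsOpen p.dom ∧ p.dom ⊆ ball (0 : EuclideanSpace ℝ (Fin d)) 1 ∧
  IsHarmonicOn p.f p.dom ∧ ContinuousOn p.f (closure p.dom) ∧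
  LipschitzOnWith (Real.toNNReal M) p.f (closure p.dom) ∧
  ∀ u ∈ closure p.dom, p.f u ≤ gstar

/-- Membership conditions for the classes `H_n`: every patch is valid, unbranched
majorants take the value `g*` on their free boundary inside `Λ`, and branched
extensions are contiguous (`v ∈ d(κ_v)`). -/
def Valid (M gstar : ℝ) : BHM d → Prop
  | base p => ValidPatch M gstar p ∧
      ∀ u ∈ frontier p.dom ∩ ball (0 : EuclideanSpace ℝ (Fin d)) 1, p.f u = gstar
  | node p κ => ValidPatch M gstar p ∧
      ∀ v ∈ intBdry gstar p, v ∈ (κ v).dom ∧ Valid M gstar (κ v)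

end BHM

/-- Evaluation extended by `+∞` off the closed base domain. -/
noncomputable def BHM.evalE {d : ℕ} (h : BHM d) (x : EuclideanSpace ℝ (Fin d)) : EReal :=
  if x ∈ closure h.dom then ((h.eval x : ℝ) : EReal) else ⊤

/-- The admissible class at depth `≤ n` and matching error `< ε`. -/
def admissible {d : ℕ} (g : EuclideanSpace ℝ (Fin d) → ℝ) (gstar M : ℝ)
    (n : ℕ) (ε : ℝ) : Set (BHM d) :=
  {h | BHM.Valid M gstar h ∧ BHM.Depth gstar h n ∧ BHM.Dominates g gstar h ∧
    BHM.bnorm gstar h < ε}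

/-- The admissible class over the full branched family `H_∞ = ⋃ n H_n`. -/
def admissibleInfty {d : ℕ} (g : EuclideanSpace ℝ (Fin d) → ℝ) (gstar M : ℝ)
    (ε : ℝ) : Set (BHM d) :=
  {h | BHM.Valid M gstar h ∧ (∃ n, BHM.Depth gstar h n) ∧ BHM.Dominates g gstar h ∧
    BHM.bnorm gstar h < ε}

/-!
Regularisation: raising a branched majorant `h` by `c ≥ ‖h‖` and truncating every domain
at the level `g*`, with the shift on each branch corrected by the matching error at its
attachment point, yields a branched majorant of the same depth with vanishing norm and values
`h + c`; where the raised values would exceed `g*`, the constant majorant `g*` is used instead.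
So every `h ∈ H_∞` with `‖h‖ < ε` lies within `ε` of some element of `H_n` of arbitrarily
small norm, which bounds `inf_n w_n` by the envelope over `H_∞`; the reverse inequality is
`H_n ⊆ H_∞`.
-/

open Set Topology

section Regularization

variable {d : ℕ}

theorem isHarmonicOn_const (c : ℝ) (s : Set (EuclideanSpace ℝ (Fin d))) :
    IsHarmonicOn (fun _ => c) s :=
  ⟨contDiffOn_const, fun u _ => by
    simp only [iteratedFDerivWithin_const_of_ne two_ne_zero, Pi.zero_apply,
      zero_apply, Finset.sum_const_zero]⟩

theorem IsHarmonicOn.add_const {f : EuclideanSpace ℝ (Fin d) → ℝ} {s : Set _}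
    (hf : IsHarmonicOn f s) (hs : UniqueDiffOn ℝ s) (c : ℝ) :
    IsHarmonicOn (fun u => f u + c) s := by
  refine ⟨hf.1.add contDiffOn_const, fun u hu => ?_⟩
  have hderiv : iteratedFDerivWithin ℝ 2 (fun u => f u + c) s u =
      iteratedFDerivWithin ℝ 2 f s u := by
    rw [fun_iteratedFDerivWithin_add_apply (hf.1 u hu) contDiffWithinAt_const hs hu,
      iteratedFDerivWithin_const_of_ne two_ne_zero, Pi.zero_apply, add_zero]
  rw [hderiv]
  exact hf.2 u hu

theorem IsHarmonicOn.mono {f : EuclideanSpace ℝ (Fin d) → ℝ} {s t : Set _}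
    (hf : IsHarmonicOn f s) (ht : IsOpen t) (hts : t ⊆ s) : IsHarmonicOn f t := by
  refine ⟨hf.1.mono hts, fun u hu => ?_⟩
  have hderiv : iteratedFDerivWithin ℝ 2 f t u = iteratedFDerivWithin ℝ 2 f s u := by
    rw [← iteratedFDerivWithin_inter_open (s := s) ht hu, inter_eq_right.2 hts]
  rw [hderiv]
  exact hf.2 u (hts hu)

namespace Patch

def regularize (gstar c : ℝ) (p : Patch d) : Patch d :=
  ⟨{u ∈ p.dom | p.f u + c < gstar}, fun u => p.f u + c⟩

variable {gstar c : ℝ} {p : Patch d}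

theorem regularize_dom_subset : (p.regularize gstar c).dom ⊆ p.dom := fun _ hu => hu.1

theorem regularize_dom_eq :
    (p.regularize gstar c).dom = p.dom ∩ p.f ⁻¹' Iio (gstar - c) := by
  ext u
  simp only [regularize, mem_sep_iff, mem_inter_iff, mem_preimage, mem_Iio, lt_sub_iff_add_lt]

theorem le_regularize_f_of_le {g : EuclideanSpace ℝ (Fin d) → ℝ}
    (hg : ∀ u ∈ closure p.dom, g u ≤ p.f u) (hc : 0 ≤ c) :
    ∀ u ∈ closure (p.regularize gstar c).dom, g u ≤ (p.regularize gstar c).f u := by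
  intro u hu
  have := hg u (closure_mono regularize_dom_subset hu)
  simp only [regularize]
  linarith

end Patch

namespace BHM

namespace ValidPatch

variable {M gstar c : ℝ} {p : Patch d}

theorem isOpen (hp : ValidPatch M gstar p) : IsOpen p.dom := hp.1

theorem continuousOn (hp : ValidPatch M gstar p) : ContinuousOn p.f (closure p.dom) :=
  hp.2.2.2.1

theorem le_gstar (hp : ValidPatch M gstar p) : ∀ u ∈ closure p.dom, p.f u ≤ gstar :=
  hp.2.2.2.2.2

theorem isOpen_regularize (hp : ValidPatch M gstar p) :
    IsOpen (p.regularize gstar c).dom := by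
  rw [Patch.regularize_dom_eq]
  exact (hp.continuousOn.mono subset_closure).isOpen_inter_preimage hp.isOpen isOpen_Iio

theorem add_le_of_mem_closure_regularize (hp : ValidPatch M gstar p)
    {u : EuclideanSpace ℝ (Fin d)} (hu : u ∈ closure (p.regularize gstar c).dom) :
    p.f u + c ≤ gstar := by
  have hsub :
      closure (p.regularize gstar c).dom ⊆ closure p.dom ∩ p.f ⁻¹' Iic (gstar - c) := by
    refine closure_minimal (fun u hu => ⟨subset_closure hu.1, ?_⟩)
      (hp.continuousOn.preimage_isClosed_of_isClosed isClosed_closure isClosed_Iic)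
    exact le_sub_iff_add_le.2 hu.2.le
  exact le_sub_iff_add_le.1 (hsub hu).2

theorem regularize (hp : ValidPatch M gstar p) : ValidPatch M gstar (p.regularize gstar c) := by
  have ⟨_, hball, hharm, hcont, hlip, _⟩ := hp
  have hclosure : closure (p.regularize gstar c).dom ⊆ closure p.dom :=
    closure_mono Patch.regularize_dom_subset
  refine ⟨hp.isOpen_regularize, fun u hu => hball hu.1, ?_, (hcont.mono hclosure).add
    continuousOn_const, fun u hu v hv => ?_, fun u hu => hp.add_le_of_mem_closure_regularize hu⟩
  · exact (hharm.add_const hp.isOpen.uniqueDiffOn c).mono hp.isOpen_regularize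
      Patch.regularize_dom_subset
  · simpa [Patch.regularize, edist_add_right] using hlip (hclosure hu) (hclosure hv)

theorem mem_frontier_of_mem_frontier_regularize (hp : ValidPatch M gstar p)
    {u : EuclideanSpace ℝ (Fin d)} (hu : u ∈ frontier (p.regularize gstar c).dom)
    (hlt : p.f u + c < gstar) :
    u ∈ frontier p.dom := by
  rw [hp.isOpen_regularize.frontier_eq] at hu
  rw [hp.isOpen.frontier_eq]
  exact ⟨closure_mono Patch.regularize_dom_subset hu.1, fun hdom => hu.2 ⟨hdom, hlt⟩⟩

theorem intBdry_regularize_subset (hp : ValidPatch M gstar p) (hc : 0 ≤ c) :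
    intBdry gstar (p.regularize gstar c) ⊆ intBdry gstar p := by
  rintro u ⟨hfr, hnorm, hlt⟩
  have hlt' : p.f u + c < gstar := hlt
  exact ⟨hp.mem_frontier_of_mem_frontier_regularize hfr hlt', hnorm, by linarith⟩

theorem regularize_f_eq_of_mem_frontier (hp : ValidPatch M gstar p) (hc : 0 ≤ c)
    (hfr : ∀ u ∈ frontier p.dom ∩ ball (0 : EuclideanSpace ℝ (Fin d)) 1, p.f u = gstar) :
    ∀ u ∈ frontier (p.regularize gstar c).dom ∩ ball (0 : EuclideanSpace ℝ (Fin d)) 1,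
      (p.regularize gstar c).f u = gstar := by
  rintro u ⟨hu, hball⟩
  refine (hp.add_le_of_mem_closure_regularize
    (frontier_subset_closure hu)).eq_or_lt.resolve_right fun hlt => ?_
  have := hfr u ⟨hp.mem_frontier_of_mem_frontier_regularize hu hlt, hball⟩
  linarith

theorem mem_closure_regularize (hp : ValidPatch M gstar p) {x : EuclideanSpace ℝ (Fin d)}
    (hx : x ∈ closure p.dom) (hlt : p.f x + c < gstar) :
    x ∈ closure (p.regularize gstar c).dom := by
  have hnhds : p.f ⁻¹' Iio (gstar - c) ∈ 𝓝[p.dom] x :=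
    nhdsWithin_mono x subset_closure <| (hp.continuousOn x hx).preimage_mem_nhdsWithin
      (Iio_mem_nhds (lt_sub_iff_add_lt.2 hlt))
  rw [mem_closure_iff_nhdsWithin_neBot] at hx ⊢
  rwa [Patch.regularize_dom_eq, nhdsWithin_inter_of_mem' hnhds]

end ValidPatch

variable {g : EuclideanSpace ℝ (Fin d) → ℝ} {gstar M c : ℝ}

theorem Dominates.le_eval {h : BHM d} (hdm : Dominates g gstar h) :
    ∀ u ∈ closure h.dom, g u ≤ h.eval u := by
  cases h with
  | base p => exact hdm
  | node p κ => exact hdm.1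

theorem Valid.validPatch {h : BHM d} (hv : Valid M gstar h) : ValidPatch M gstar h.patch := by
  cases h with
  | base p => exact hv.1
  | node p κ => exact hv.1

theorem Depth.exists_eq_succ {h : BHM d} {n : ℕ} (hdep : Depth gstar h n) :
    ∃ m, n = m + 1 := by
  cases hdep <;> exact ⟨_, rfl⟩

theorem bnorm_nonneg (gstar : ℝ) (h : BHM d) : 0 ≤ bnorm gstar h := by
  induction h with
  | base p => exact le_rfl
  | node p κ ih =>
    exact add_nonneg (Real.iSup_nonneg fun v => abs_nonneg _) (Real.iSup_nonneg fun v => ih v.1)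

theorem abs_sub_eval_le (hg0 : ∀ u, 0 ≤ g u) {p : Patch d}
    {κ : EuclideanSpace ℝ (Fin d) → BHM d}
    (hv : Valid M gstar (node p κ)) (hdm : Dominates g gstar (node p κ))
    {v : EuclideanSpace ℝ (Fin d)} (hvb : v ∈ intBdry gstar p) :
    |p.f v - (κ v).eval v| ≤ gstar := by
  have hvp : v ∈ closure p.dom := frontier_subset_closure hvb.1
  have hvκ : v ∈ closure (κ v).dom := subset_closure (hv.2 v hvb).1
  have h1 : 0 ≤ p.f v := (hg0 v).trans (hdm.1 v hvp)
  have h2 : p.f v ≤ gstar := hv.1.le_gstar v hvp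
  have h3 : 0 ≤ (κ v).eval v := (hg0 v).trans ((hdm.2 v hvb).le_eval v hvκ)
  have h4 : (κ v).eval v ≤ gstar := (hv.2 v hvb).2.validPatch.le_gstar v hvκ
  rw [abs_sub_le_iff]
  constructor <;> linarith

theorem Depth.bnorm_le (hg0 : ∀ u, 0 ≤ g u) (hgstar : 0 ≤ gstar) {h : BHM d} {n : ℕ}
    (hdep : Depth gstar h n) (hv : Valid M gstar h) (hdm : Dominates g gstar h) :
    bnorm gstar h ≤ n * gstar := by
  induction hdep with
  | base p n => simp only [bnorm]; positivity
  | node p κ n _ ih =>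
    have hmatch := Real.iSup_le (fun v : intBdry gstar p => abs_sub_eval_le hg0 hv hdm v.2) hgstar
    have hbranch := Real.iSup_le (fun v : intBdry gstar p =>
      ih v.1 v.2 (hv.2 v.1 v.2).2 (hdm.2 v.1 v.2)) (by positivity)
    simp only [bnorm]
    push_cast
    linarith

theorem abs_sub_eval_add_bnorm_le (hg0 : ∀ u, 0 ≤ g u) (hgstar : 0 ≤ gstar) {p : Patch d}
    {κ : EuclideanSpace ℝ (Fin d) → BHM d} {n : ℕ} (hdep : Depth gstar (node p κ) n)
    (hv : Valid M gstar (node p κ)) (hdm : Dominates g gstar (node p κ))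
    {v : EuclideanSpace ℝ (Fin d)} (hvb : v ∈ intBdry gstar p) :
    |p.f v - (κ v).eval v| + bnorm gstar (κ v) ≤ bnorm gstar (node p κ) := by
  -- `⨆` over an unbounded real family is `0`, so both bounds above are needed here.
  cases hdep with
  | node _ _ m hchild =>
    refine add_le_add (le_ciSup (f := fun v : intBdry gstar p => |p.f v - (κ v).eval v|)
      ⟨gstar, ?_⟩ ⟨v, hvb⟩) (le_ciSup (f := fun v : intBdry gstar p => bnorm gstar (κ v))
      ⟨m * gstar, ?_⟩ ⟨v, hvb⟩)
    · rintro _ ⟨w, rfl⟩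
      exact abs_sub_eval_le hg0 hv hdm w.2
    · rintro _ ⟨w, rfl⟩
      exact (hchild w.1 w.2).bnorm_le hg0 hgstar (hv.2 w.1 w.2).2 (hdm.2 w.1 w.2)

theorem bnorm_node_eq_zero {p : Patch d} {κ : EuclideanSpace ℝ (Fin d) → BHM d}
    (h : ∀ v ∈ intBdry gstar p, p.f v = (κ v).eval v ∧ bnorm gstar (κ v) = 0) :
    bnorm gstar (node p κ) = 0 := by
  have hmatch : (fun v : intBdry gstar p => |p.f v - (κ v).eval v|) = fun _ => 0 :=
    funext fun v => by rw [(h v.1 v.2).1, sub_self, abs_zero]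
  have hbranch : (fun v : intBdry gstar p => bnorm gstar (κ v)) = fun _ => 0 :=
    funext fun v => (h v.1 v.2).2
  simp only [bnorm, hmatch, hbranch, Real.iSup_const_zero, add_zero]

/-- The paper's `h⁰` is `h.regularize gstar ‖h‖`. -/
def regularize (gstar : ℝ) : BHM d → ℝ → BHM d
  | base p, c => base (p.regularize gstar c)
  | node p κ, c => node (p.regularize gstar c)
      -- the correction makes each branch agree with the raised patch at its attachment point
      fun v => regularize gstar (κ v) (c + p.f v - (κ v).eval v)

theorem patch_regularize (h : BHM d) (c : ℝ) :
    (h.regularize gstar c).patch = h.patch.regularize gstar c := by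
  cases h <;> rfl

theorem dom_regularize (h : BHM d) (c : ℝ) :
    (h.regularize gstar c).dom = {u ∈ h.dom | h.eval u + c < gstar} := by
  cases h <;> rfl

theorem eval_regularize (h : BHM d) (c : ℝ) (u : EuclideanSpace ℝ (Fin d)) :
    (h.regularize gstar c).eval u = h.eval u + c := by
  cases h <;> rfl

theorem regularize_spec (hg0 : ∀ u, 0 ≤ g u) (hgstar : 0 ≤ gstar) {h : BHM d} {n : ℕ}
    (hdep : Depth gstar h n) (hv : Valid M gstar h) (hdm : Dominates g gstar h)
    (hc : bnorm gstar h ≤ c) :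
    Valid M gstar (h.regularize gstar c) ∧ Dominates g gstar (h.regularize gstar c) ∧
      Depth gstar (h.regularize gstar c) n ∧ bnorm gstar (h.regularize gstar c) = 0 := by
  induction hdep generalizing c with
  | base p n =>
    have hc0 : 0 ≤ c := (bnorm_nonneg gstar _).trans hc
    exact ⟨⟨hv.1.regularize, hv.1.regularize_f_eq_of_mem_frontier hc0 hv.2⟩,
      Patch.le_regularize_f_of_le hdm hc0, Depth.base _ n, rfl⟩
  | node p κ n hchild ih =>
    have hc0 : 0 ≤ c := (bnorm_nonneg gstar _).trans hc
    have hsub := hv.1.intBdry_regularize_subset (c := c) hc0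
    have hshift : ∀ v ∈ intBdry gstar p, bnorm gstar (κ v) ≤ c + p.f v - (κ v).eval v :=
      fun v hvb => by
        have := abs_sub_eval_add_bnorm_le hg0 hgstar (Depth.node p κ n hchild) hv hdm hvb
        have := neg_abs_le (p.f v - (κ v).eval v)
        linarith
    have hbranch v (hvb : v ∈ intBdry gstar (p.regularize gstar c)) :=
      ih v (hsub hvb) (hv.2 v (hsub hvb)).2 (hdm.2 v (hsub hvb)) (hshift v (hsub hvb))
    refine ⟨⟨hv.1.regularize, fun v hvb => ⟨?_, (hbranch v hvb).1⟩⟩,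
      ⟨Patch.le_regularize_f_of_le hdm.1 hc0, fun v hvb => (hbranch v hvb).2.1⟩,
      Depth.node _ _ n fun v hvb => (hbranch v hvb).2.2.1,
      bnorm_node_eq_zero fun v hvb => ⟨?_, (hbranch v hvb).2.2.2⟩⟩
    · have hlt : p.f v + c < gstar := hvb.2.2
      rw [dom_regularize]
      exact ⟨(hv.2 v (hsub hvb)).1, by linarith⟩
    · rw [eval_regularize]
      show p.f v + c = _
      ring

theorem eval_le_evalE (h : BHM d) (x : EuclideanSpace ℝ (Fin d)) :
    (h.eval x : EReal) ≤ h.evalE x := by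
  unfold evalE
  split_ifs
  exacts [le_rfl, le_top]

theorem evalE_of_mem_closure {h : BHM d} {x : EuclideanSpace ℝ (Fin d)}
    (hx : x ∈ closure h.dom) : h.evalE x = h.eval x := if_pos hx

def const (d : ℕ) (a : ℝ) : BHM d :=
  base ⟨ball 0 1, fun _ => a⟩

theorem const_mem_admissible {a ε : ℝ} (hga : ∀ u, g u ≤ a) (hag : a ≤ gstar) (n : ℕ)
    (hε : 0 < ε) : const d a ∈ admissible g gstar M (n + 1) ε := by
  have hfrontier : frontier (ball (0 : EuclideanSpace ℝ (Fin d)) 1) ∩ ball 0 1 = ∅ := by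
    rw [isOpen_ball.frontier_eq, sdiff_inter_self]
  refine ⟨⟨⟨isOpen_ball, subset_rfl, isHarmonicOn_const a _, continuousOn_const,
    LipschitzWith.const a |>.lipschitzOnWith.weaken bot_le, fun _ _ => hag⟩, ?_⟩,
    Depth.base _ n, fun u _ => hga u, hε⟩
  simp only [hfrontier]
  exact fun u hu => hu.elim

theorem exists_mem_admissible_evalE_le (hg0 : ∀ u, 0 ≤ g u) (hgs : ∀ u, g u ≤ gstar)
    {h : BHM d} {n : ℕ} (hdep : Depth gstar h n) (hv : Valid M gstar h)
    (hdm : Dominates g gstar h) {x : EuclideanSpace ℝ (Fin d)} (hx : x ∈ ball 0 1) {ε : ℝ}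
    (hε : 0 < ε) :
    ∃ h' ∈ admissible g gstar M n ε, h'.evalE x ≤ h.evalE x + bnorm gstar h := by
  have hgstar : 0 ≤ gstar := (hg0 0).trans (hgs 0)
  set c := bnorm gstar h
  by_cases hreg : x ∈ closure (h.regularize gstar c).dom
  · obtain ⟨hv', hdm', hdep', hc'⟩ := regularize_spec hg0 hgstar hdep hv hdm le_rfl
    refine ⟨h.regularize gstar c, ⟨hv', hdep', hdm', hc' ▸ hε⟩, ?_⟩
    rw [evalE_of_mem_closure hreg, eval_regularize, EReal.coe_add]
    exact add_le_add_left (eval_le_evalE h x) _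
  · obtain ⟨m, rfl⟩ := hdep.exists_eq_succ
    refine ⟨const d gstar, const_mem_admissible hgs le_rfl m hε, ?_⟩
    rw [evalE_of_mem_closure (subset_closure hx : x ∈ closure (ball 0 1))]
    by_cases hxh : x ∈ closure h.dom
    · have hle : gstar ≤ h.eval x + c :=
        not_lt.1 fun hlt => hreg <| by
          rw [dom, patch_regularize]
          exact hv.validPatch.mem_closure_regularize hxh hlt
      rw [evalE_of_mem_closure hxh, ← EReal.coe_add]
      exact EReal.coe_le_coe_iff.2 hle
    · rw [evalE, if_neg hxh, EReal.top_add_coe]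
      exact le_top

theorem envelope_le_evalE_add_bnorm (hg0 : ∀ u, 0 ≤ g u) (hgs : ∀ u, g u ≤ gstar)
    {h : BHM d} {n : ℕ} (hdep : Depth gstar h n) (hv : Valid M gstar h)
    (hdm : Dominates g gstar h) {x : EuclideanSpace ℝ (Fin d)} (hx : x ∈ ball 0 1) :
    (⨆ (ε : ℝ) (_ : 0 < ε), ⨅ h' ∈ admissible g gstar M n ε, h'.evalE x) ≤
      h.evalE x + bnorm gstar h :=
  iSup₂_le fun _ hε =>
    let ⟨h', hmem, hle⟩ := exists_mem_admissible_evalE_le hg0 hgs hdep hv hdm hx hε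
    (iInf₂_le h' hmem).trans hle

end BHM

theorem admissible_subset_admissibleInfty {g : EuclideanSpace ℝ (Fin d) → ℝ} {gstar M : ℝ}
    (n : ℕ) (ε : ℝ) : admissible g gstar M n ε ⊆ admissibleInfty g gstar M ε :=
  fun _ ⟨hv, hdep, hdm, hε⟩ => ⟨hv, ⟨n, hdep⟩, hdm, hε⟩

end Regularization

theorem limit_envelope_eq_envelope_over_union_general {d : ℕ}
    (g : EuclideanSpace ℝ (Fin d) → ℝ)
    (hg0 : ∀ u, 0 ≤ g u)
    (gstar : ℝ) (hgs : ∀ u, g u < gstar) (M : ℝ)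
    (w : ℕ → EuclideanSpace ℝ (Fin d) → EReal)
    (hw : ∀ n x, w n x = ⨆ (ε : ℝ) (_ : 0 < ε),
      ⨅ h ∈ admissible g gstar M n ε, BHM.evalE h x)
    (winfty : EuclideanSpace ℝ (Fin d) → EReal)
    (hwinfty : ∀ x, winfty x = ⨆ (ε : ℝ) (_ : 0 < ε),
      ⨅ h ∈ admissibleInfty g gstar M ε, BHM.evalE h x) :
    ∀ x ∈ ball (0 : EuclideanSpace ℝ (Fin d)) 1,
      (⨅ n : ℕ, w n x) = winfty x := by
  intro x hx
  refine le_antisymm (EReal.le_of_forall_lt_iff_le.1 fun z hz => ?_) (le_iInf fun n => ?_)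
  · obtain ⟨y, hy, hyz⟩ := EReal.lt_iff_exists_real_btwn.1 hz
    have hlt : (⨅ h ∈ admissibleInfty g gstar M (z - y), h.evalE x) < y :=
      (le_iSup₂ (f := fun ε (_ : 0 < ε) => ⨅ h ∈ admissibleInfty g gstar M ε, h.evalE x)
        (z - y) (sub_pos.2 (EReal.coe_lt_coe_iff.1 hyz))).trans_lt (hwinfty x ▸ hy)
    obtain ⟨h, ⟨hv, ⟨n, hdep⟩, hdm, hnorm⟩, hhy⟩ := by
      simpa only [iInf_lt_iff] using hlt
    calc ⨅ n, w n x ≤ w n x := iInf_le _ n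
      _ ≤ h.evalE x + BHM.bnorm gstar h :=
        hw n x ▸ BHM.envelope_le_evalE_add_bnorm hg0 (fun u => (hgs u).le) hdep hv hdm hx
      _ ≤ y + (z - y : ℝ) := add_le_add hhy.le (EReal.coe_le_coe_iff.2 hnorm.le)
      _ = z := by rw [← EReal.coe_add, add_sub_cancel]
  · rw [hw, hwinfty]
    exact iSup₂_mono fun ε _ => biInf_mono fun _ hh => admissible_subset_admissibleInfty n ε hh

/-- the limit envelope `inf_n w_n` coincides with the envelope taken over
the full branched class `H_∞` (with matching error tending to zero; the limit as
`ε → 0` of the decreasing-in-`ε` infima is their supremum over `ε > 0`). -/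
theorem limit_envelope_eq_envelope_over_union {d : ℕ} (hd : 2 ≤ d)
    (g : EuclideanSpace ℝ (Fin d) → ℝ)
    (hgc : Continuous g) (hg0 : ∀ u, 0 ≤ g u)
    (hsupp : IsCompact (tsupport g))
    (hsuppΛ : tsupport g ⊆ ball (0 : EuclideanSpace ℝ (Fin d)) 1)
    (gstar : ℝ) (hgs : ∀ u, g u < gstar) (M : ℝ) (hM : 0 < M)
    (w : ℕ → EuclideanSpace ℝ (Fin d) → EReal)
    (hw : ∀ n x, w n x = ⨆ (ε : ℝ) (_ : 0 < ε),
      ⨅ h ∈ admissible g gstar M n ε, BHM.evalE h x)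
    (winfty : EuclideanSpace ℝ (Fin d) → EReal)
    (hwinfty : ∀ x, winfty x = ⨆ (ε : ℝ) (_ : 0 < ε),
      ⨅ h ∈ admissibleInfty g gstar M ε, BHM.evalE h x) :
    ∀ x ∈ ball (0 : EuclideanSpace ℝ (Fin d)) 1,
      (⨅ n : ℕ, w n x) = winfty x :=
  limit_envelope_eq_envelope_over_union_general g hg0 gstar hgs M w hw winfty hwinfty
end
end
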